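/- arXiv:2110.08886 — 5 statements merged into one kernel-verified Lean document; each statement's English description precedes it below -/
import Mathlib

section
/- Swapping lemma for domination: let s, t ∈ ℝ^m, let π be a permutation with s_{π(k)} ≥ t_k for all k, let i ≠ j be indices, and let x > 0. Define s' by adding x to coordinate π(j) of s and leaving other coordinates unchanged, and define t' by adding x to coordinate i of t. If s_{π(j)} ≤ s_{π(i)} and t_i ≤ t_j (i.e., t_i is minimal among the coordinates where x is added in t, and s_{π(j)} is minimal in s), then s' dominates t' via the permutation π' obtained from π by swapping the values π(i) and π(j). -/
open Function Equiv

/- Only the coordinates `i` and `j` change. At `i`, `t i + x ≤ t j + x ≤ s (π j) + x`; at `j`,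
`t j ≤ s (π j) ≤ s (π i)`. -/
theorem update_le_update_swap_trans {ι β : Type*} [DecidableEq ι] [Preorder β] [Add β]
    [AddRightMono β] {s t : ι → β} {π : Perm ι} (hdom : ∀ k, t k ≤ s (π k)) {i j : ι}
    (hs : s (π j) ≤ s (π i)) (ht : t i ≤ t j) (x : β) (k : ι) :
    update t i (t i + x) k ≤ update s (π j) (s (π j) + x) ((swap i j).trans π k) := by
  rw [trans_apply]
  rcases eq_or_ne k i with rfl | hki
  · rw [update_self, swap_apply_left, update_self]
    exact add_le_add_left (ht.trans (hdom j)) x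
  rw [update_of_ne hki]
  rcases eq_or_ne k j with rfl | hkj
  · rw [swap_apply_right, update_of_ne (fun h => hki (π.injective h).symm)]
    exact (hdom k).trans hs
  · rw [swap_apply_of_ne_of_ne hki hkj, update_of_ne (fun h => hkj (π.injective h))]
    exact hdom k

theorem dominates_swap_general {m : ℕ} (s t : Fin m → ℝ) (π : Equiv.Perm (Fin m))
    (hdom : ∀ k, t k ≤ s (π k)) (i j : Fin m) (x : ℝ)
    (hs : s (π j) ≤ s (π i)) (ht : t i ≤ t j) :
    ∀ k, Function.update t i (t i + x) k ≤
      Function.update s (π j) (s (π j) + x) (((Equiv.swap i j).trans π) k) :=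
  update_le_update_swap_trans hdom hs ht x

/-- Swapping lemma for domination: if `s` dominates `t` via `π`, `x > 0` is added to
coordinate `π j` of `s` and to coordinate `i` of `t`, where `s (π j) ≤ s (π i)` and
`t i ≤ t j`, then the updated vectors satisfy domination via the permutation obtained
from `π` by swapping the values `π i` and `π j`. -/
theorem dominates_swap {m : ℕ} (hm : 2 ≤ m) (s t : Fin m → ℝ) (π : Equiv.Perm (Fin m))
    (hdom : ∀ k, t k ≤ s (π k)) (i j : Fin m) (hij : i ≠ j) (x : ℝ) (hx : 0 < x)
    (hs : s (π j) ≤ s (π i)) (ht : t i ≤ t j) :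
    ∀ k, Function.update t i (t i + x) k ≤
      Function.update s (π j) (s (π j) + x) (((Equiv.swap i j).trans π) k) :=
  dominates_swap_general s t π hdom i j x hs ht
end

section
/- List Scheduling (LS) is value-monotone with respect to a single increase: fix m ≥ 2, an input sequence x = (x_1,...,x_n) of positive reals, an index j, and ε > 0; let x' equal x except x'_j = x_j + ε. Then the vector of bin sums produced by LS on input x' dominates the vector of bin sums produced by LS on input x. -/
open scoped Classical

/-- The bin chosen by List Scheduling: the smallest-index bin with minimal current sum. -/
noncomputable def lsIndex {m : ℕ} (hm : 0 < m) (v : Fin m → ℝ) : Fin m :=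
  (Finset.univ.filter fun i => ∀ j, v i ≤ v j).min' (by
    obtain ⟨i, -, hi⟩ := Finset.exists_min_image Finset.univ v ⟨⟨0, hm⟩, Finset.mem_univ _⟩
    exact ⟨i, Finset.mem_filter.mpr ⟨Finset.mem_univ _, fun j => hi j (Finset.mem_univ _)⟩⟩)

/-- One step of List Scheduling: place `x` into the chosen bin. -/
noncomputable def lsStep {m : ℕ} (hm : 0 < m) (v : Fin m → ℝ) (x : ℝ) : Fin m → ℝ :=
  Function.update v (lsIndex hm v) (v (lsIndex hm v) + x)

/-- The vector of bin sums after List Scheduling processes the list `xs` into `m` bins. -/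
noncomputable def lsSums {m : ℕ} (hm : 0 < m) (xs : List ℝ) : Fin m → ℝ :=
  xs.foldl (lsStep hm) (fun _ => 0)

/-- `s` dominates `t` iff some permutation `π` satisfies `s (π i) ≥ t i` for all `i`. -/
def Dominates {m : ℕ} (s t : Fin m → ℝ) : Prop :=
  ∃ π : Equiv.Perm (Fin m), ∀ i, t i ≤ s (π i)

/-!
List Scheduling is monotone: if every input is at least as large, the new bin sums dominate the
old ones. By induction along the input list it suffices to check one step. If `s` dominates `t`,
the matching permutation can be chosen to send the least bin of `t` to the least bin of `s`;
LS puts the larger item into the latter and the smaller into the former, and leaves all other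
bins unchanged, so the same permutation witnesses domination after the step.
-/

theorem Dominates.refl {m : ℕ} (s : Fin m → ℝ) : Dominates s s :=
  ⟨Equiv.refl _, fun _ => le_rfl⟩

theorem Dominates.exists_perm_apply_eq {m : ℕ} {s t : Fin m → ℝ} (h : Dominates s t)
    {i₀ k₀ : Fin m} (ht : ∀ i, t i₀ ≤ t i) (hs : ∀ k, s k₀ ≤ s k) :
    ∃ π : Equiv.Perm (Fin m), (∀ i, t i ≤ s (π i)) ∧ π i₀ = k₀ := by
  obtain ⟨π, hπ⟩ := h
  refine ⟨π.trans (Equiv.swap k₀ (π i₀)), fun i => ?_, by simp⟩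
  simp only [Equiv.trans_apply, Equiv.swap_apply_def]
  split_ifs with hk hi
  · exact (hπ i).trans (hk ▸ hs _)
  · obtain rfl := π.injective hi
    simpa using (ht (π.symm k₀)).trans (hπ (π.symm k₀))
  · exact hπ i

theorem apply_lsIndex_le {m : ℕ} (hm : 0 < m) (v : Fin m → ℝ) (k : Fin m) :
    v (lsIndex hm v) ≤ v k := by
  have h := Finset.min'_mem (Finset.univ.filter fun i => ∀ j, v i ≤ v j) (by
    obtain ⟨i, -, hi⟩ := Finset.exists_min_image Finset.univ v ⟨⟨0, hm⟩, Finset.mem_univ _⟩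
    exact ⟨i, Finset.mem_filter.mpr ⟨Finset.mem_univ _, fun j => hi j (Finset.mem_univ _)⟩⟩)
  exact (Finset.mem_filter.mp h).2 k

theorem Dominates.lsStep_lsStep {m : ℕ} (hm : 0 < m) {s t : Fin m → ℝ} {a b : ℝ} (hab : b ≤ a)
    (h : Dominates s t) : Dominates (lsStep hm s a) (lsStep hm t b) := by
  obtain ⟨π, hπ, hπ₀⟩ := h.exists_perm_apply_eq (apply_lsIndex_le hm t) (apply_lsIndex_le hm s)
  refine ⟨π, fun i => ?_⟩
  by_cases hi : i = lsIndex hm t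
  · subst hi
    simp only [lsStep, hπ₀, Function.update_self]
    linarith [hπ (lsIndex hm t), hπ₀ ▸ hπ (lsIndex hm t)]
  · have hπi : π i ≠ lsIndex hm s := hπ₀ ▸ π.injective.ne hi
    simpa only [lsStep, Function.update_of_ne hi, Function.update_of_ne hπi] using hπ i

theorem Dominates.foldl_lsStep {m : ℕ} (hm : 0 < m) {as bs : List ℝ}
    (hab : List.Forall₂ (· ≤ ·) bs as) {s t : Fin m → ℝ} (h : Dominates s t) :
    Dominates (as.foldl (lsStep hm) s) (bs.foldl (lsStep hm) t) := by
  induction hab generalizing s t with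
  | nil => exact h
  | cons hb _ ih => exact ih (h.lsStep_lsStep hm hb)

theorem lsSums_ofFn_dominates_of_le {m n : ℕ} (hm : 0 < m) {x y : Fin n → ℝ} (hxy : x ≤ y) :
    Dominates (lsSums hm (List.ofFn y)) (lsSums hm (List.ofFn x)) := by
  refine Dominates.foldl_lsStep hm ?_ (Dominates.refl _)
  rw [List.forall₂_iff_get]
  exact ⟨by simp, fun i _ _ => by simpa using hxy _⟩

/-- List Scheduling is value-monotone with respect to a single increase:
increasing one input by `ε > 0` makes the output bin-sum vector dominate the old one. -/
theorem ls_single_increase_dominates {m n : ℕ} (hm : 2 ≤ m) (x : Fin n → ℝ)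
    (j : Fin n) (ε : ℝ) (hε : 0 < ε) :
    Dominates (lsSums (by omega : 0 < m) (List.ofFn (Function.update x j (x j + ε))))
      (lsSums (by omega : 0 < m) (List.ofFn x)) :=
  lsSums_ofFn_dominates_of_le _ (le_update_self_iff.mpr (by linarith))
end

section
/- MultiFit is not value-monotone: for m = 3, on the input (44, 24, 24, 22, 21, 17, 8, 8, 6, 6) MultiFit (using FFD with binary search over capacities) achieves largest bin sum 60, but on the pointwise-smaller input (44, 24, 24, 22, 21, 16, 8, 8, 6, 6) the smallest capacity c for which FFD packs all inputs into at most 3 bins is 62, so the largest bin sum increases from 60 to 62 when an input decreases. -/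
open scoped Classical

/-- One pass of First Fit Decreasing with capacity `c`: greedily add inputs (in order)
to the current bin of sum `s` when they fit; return the final bin sum together with
the skipped inputs (in order). -/
noncomputable def ffdBinAux (c : ℝ) : List ℝ → ℝ → ℝ × List ℝ
  | [], s => (s, [])
  | x :: l, s =>
      if s + x ≤ c then ffdBinAux c l (s + x)
      else
        let p := ffdBinAux c l s
        (p.1, x :: p.2)

/-- FFD bins with capacity `c`: repeatedly open a new bin and greedily fill it from
the remaining inputs; `fuel` bounds the number of bins opened. Returns the list of
bin sums. -/
noncomputable def ffdBins (c : ℝ) : ℕ → List ℝ → List ℝ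
  | 0, _ => []
  | _, [] => []
  | fuel + 1, x :: l =>
      let p := ffdBinAux c (x :: l) 0
      p.1 :: ffdBins c fuel p.2

/-- First Fit Decreasing with capacity `c`: sort the inputs in nonincreasing order and
pack them greedily into bins of capacity `c`; returns the list of bin sums. -/
noncomputable def ffd (c : ℝ) (xs : List ℝ) : List ℝ :=
  ffdBins c xs.length (xs.mergeSort (fun a b => decide (b ≤ a)))

/-!
FFD never overfills a bin, so if it packs an input into three bins of capacity `c` then
`3 * c` is at least the total size: `180` for the first input, `179` for the second. For the
first input this gives `c ≥ 60`, and at `c = 60` FFD fills three bins exactly. On integer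
inputs FFD behaves at capacity `c` as at `⌊c⌋`, so for the second input only the capacities
`59`, `60`, `61` remain below `62`; FFD opens a fourth bin at each of them, while at `62` it
packs the input into bins of sums `60, 62, 57`.
-/

section Ffd

variable (c : ℝ)

theorem ffdBinAux_fst_add_sum (l : List ℝ) (s : ℝ) :
    (ffdBinAux c l s).1 + (ffdBinAux c l s).2.sum = s + l.sum := by
  induction l generalizing s with
  | nil => simp [ffdBinAux]
  | cons x l ih =>
    rw [ffdBinAux]
    split
    · simp only [List.sum_cons]; linarith [ih (s + x)]
    · simp only [List.sum_cons]; linarith [ih s]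

theorem ffdBinAux_fst_le_max (l : List ℝ) (s : ℝ) : (ffdBinAux c l s).1 ≤ max s c := by
  induction l generalizing s with
  | nil => simp [ffdBinAux]
  | cons x l ih =>
    rw [ffdBinAux]
    split
    · next hfit => exact (ih _).trans (max_le (hfit.trans le_sup_right) le_sup_right)
    · exact ih s

theorem ffdBinAux_snd_sublist (l : List ℝ) (s : ℝ) : (ffdBinAux c l s).2.Sublist l := by
  induction l generalizing s with
  | nil => simp [ffdBinAux]
  | cons x l ih =>
    rw [ffdBinAux]
    split
    · exact (ih _).cons x
    · exact (ih s).cons_cons x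

theorem le_max_of_mem_ffdBins {fuel : ℕ} {l : List ℝ} {s : ℝ} (hs : s ∈ ffdBins c fuel l) :
    s ≤ max 0 c := by
  induction fuel generalizing l with
  | zero => simp [ffdBins] at hs
  | succ n ih =>
    match l, hs with
    | x :: l, hs =>
      rcases List.mem_cons.1 hs with rfl | hs
      · exact ffdBinAux_fst_le_max c _ 0
      · exact ih hs

/-- An input larger than `c` is never packed; FFD then keeps opening empty bins until the fuel
runs out, so only `length < fuel` certifies that every input was packed. -/
theorem sum_ffdBins_of_length_lt {fuel : ℕ} {l : List ℝ} (h : (ffdBins c fuel l).length < fuel) :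
    (ffdBins c fuel l).sum = l.sum := by
  induction fuel generalizing l with
  | zero => simp at h
  | succ n ih =>
    match l with
    | [] => simp [ffdBins]
    | x :: l =>
      simp only [ffdBins, List.length_cons, List.sum_cons] at h ⊢
      rw [ih (by omega), ffdBinAux_fst_add_sum, zero_add, List.sum_cons]

theorem sum_le_mul_of_length_ffd_le {xs : List ℝ} {m : ℕ} (hsum : 0 < xs.sum)
    (hm : m < xs.length) (h : (ffd c xs).length ≤ m) : xs.sum ≤ m * c := by
  have hpacked : (ffd c xs).sum = xs.sum := by
    rw [ffd, sum_ffdBins_of_length_lt c (by rw [← ffd]; omega)]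
    exact (List.mergeSort_perm xs _).sum_eq
  have hvol : xs.sum ≤ m * max 0 c :=
    calc xs.sum = (ffd c xs).sum := hpacked.symm
      _ ≤ (ffd c xs).length • max 0 c :=
          List.sum_le_card_nsmul _ _ fun s hs => le_max_of_mem_ffdBins c hs
      _ ≤ m * max 0 c := by
          rw [nsmul_eq_mul]; gcongr
  rcases max_cases 0 c with ⟨hmax, -⟩ | ⟨hmax, -⟩ <;> rw [hmax] at hvol
  · linarith
  · exact hvol

theorem ffd_of_pairwise {xs : List ℝ} (h : xs.Pairwise (· ≥ ·)) :
    ffd c xs = ffdBins c xs.length xs := by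
  rw [ffd, List.mergeSort_of_pairwise (by simpa using h)]

theorem ffdBinAux_floor {l : List ℝ} (hl : ∀ x ∈ l, (⌊x⌋ : ℝ) = x) (n : ℤ) :
    ffdBinAux c l n = ffdBinAux ⌊c⌋ l n := by
  induction l generalizing n with
  | nil => rfl
  | cons x l ih =>
    have hx : (n : ℝ) + x = ((n + ⌊x⌋ : ℤ) : ℝ) := by push_cast; rw [hl x (by simp)]
    have hfit : ((n + ⌊x⌋ : ℤ) : ℝ) ≤ c ↔ ((n + ⌊x⌋ : ℤ) : ℝ) ≤ ⌊c⌋ := by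
      rw [Int.cast_le, Int.le_floor]
    have ih' := ih fun y hy => hl y (List.mem_cons_of_mem x hy)
    simp only [ffdBinAux, hx, hfit, ih']

theorem ffdBins_floor {l : List ℝ} (hl : ∀ x ∈ l, (⌊x⌋ : ℝ) = x) (fuel : ℕ) :
    ffdBins c fuel l = ffdBins ⌊c⌋ fuel l := by
  induction fuel generalizing l with
  | zero => rfl
  | succ n ih =>
    match l with
    | [] => rfl
    | x :: l =>
      have h0 := ffdBinAux_floor c hl 0
      rw [Int.cast_zero] at h0
      simp only [ffdBins, h0]
      exact congrArg _ (ih fun y hy => hl y ((ffdBinAux_snd_sublist _ _ _).subset hy))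

theorem ffd_floor {xs : List ℝ} (hxs : ∀ x ∈ xs, (⌊x⌋ : ℝ) = x) : ffd c xs = ffd ⌊c⌋ xs :=
  ffdBins_floor c (fun x hx => hxs x ((List.mergeSort_perm xs _).subset hx)) _

end Ffd

theorem ffd_first_input_sixty :
    ffd 60 [44, 24, 24, 22, 21, 17, 8, 8, 6, 6] = [60, 60, 60] := by
  rw [ffd_of_pairwise _ (by norm_num)]
  norm_num [ffdBins, ffdBinAux]

theorem ffd_second_input_sixtyTwo :
    ffd 62 [44, 24, 24, 22, 21, 16, 8, 8, 6, 6] = [60, 62, 57] := by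
  rw [ffd_of_pairwise _ (by norm_num)]
  norm_num [ffdBins, ffdBinAux]

theorem length_ffd_second_input {c : ℝ} (hlo : 59 ≤ c) (hhi : c < 62) :
    (ffd c [44, 24, 24, 22, 21, 16, 8, 8, 6, 6]).length = 4 := by
  rw [ffd_floor c (by simp), ffd_of_pairwise _ (by norm_num)]
  have hlo' : 59 ≤ ⌊c⌋ := Int.le_floor.2 (by exact_mod_cast hlo)
  have hhi' : ⌊c⌋ < 62 := Int.floor_lt.2 (by exact_mod_cast hhi)
  interval_cases ⌊c⌋ <;> norm_num [ffdBins, ffdBinAux]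

/-- MultiFit is not value-monotone: for `m = 3`, on `(44,24,24,22,21,17,8,8,6,6)` the
smallest capacity for which FFD packs all inputs into at most 3 bins is 60, and every
bin sum of the resulting packing is at most 60 (with some bin attaining 60); on the
pointwise-smaller input `(44,24,24,22,21,16,8,8,6,6)` the smallest such capacity is 62,
and the resulting largest bin sum is 62. Thus the largest bin sum increases from 60 to
62 when an input decreases. -/
theorem multifit_not_value_monotone :
    IsLeast {c : ℝ | (ffd c [44, 24, 24, 22, 21, 17, 8, 8, 6, 6]).length ≤ 3} 60 ∧
    (∀ s ∈ ffd 60 [44, 24, 24, 22, 21, 17, 8, 8, 6, 6], s ≤ 60) ∧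
    (60 : ℝ) ∈ ffd 60 [44, 24, 24, 22, 21, 17, 8, 8, 6, 6] ∧
    IsLeast {c : ℝ | (ffd c [44, 24, 24, 22, 21, 16, 8, 8, 6, 6]).length ≤ 3} 62 ∧
    (∀ s ∈ ffd 62 [44, 24, 24, 22, 21, 16, 8, 8, 6, 6], s ≤ 62) ∧
    (62 : ℝ) ∈ ffd 62 [44, 24, 24, 22, 21, 16, 8, 8, 6, 6] ∧
    (60 : ℝ) < 62 := by
  simp only [IsLeast, lowerBounds, Set.mem_ofPred_eq, ffd_first_input_sixty,
    ffd_second_input_sixtyTwo]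
  refine ⟨⟨by simp, fun c hc => ?_⟩, by simp, by simp, ⟨by simp, fun c hc => ?_⟩,
    by norm_num, by simp, by norm_num⟩
  · have hvol := sum_le_mul_of_length_ffd_le c (by norm_num) (by simp) hc
    norm_num at hvol
    linarith
  · have hvol := sum_le_mul_of_length_ffd_le c (by norm_num) (by simp) hc
    norm_num at hvol
    by_contra! hlt
    have hfour := length_ffd_second_input (by linarith) hlt
    omega
end

section
/- FFD with capacity 60 on the input (44, 24, 24, 22, 21, 17, 8, 8, 6, 6) uses exactly 3 bins: (44+8+8), (24+24+6+6), (22+21+17), each with sum exactly 60; moreover, for any capacity c < 60, FFD with capacity c uses more than 3 bins on this input. -/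
open scoped Classical

lemma ffd_sorted10 :
    ([44, 24, 24, 22, 21, 17, 8, 8, 6, 6] : List ℝ).mergeSort (fun a b => decide (b ≤ a)) =
      [44, 24, 24, 22, 21, 17, 8, 8, 6, 6] := by
  apply List.mergeSort_of_pairwise
  simp [List.Pairwise]; norm_num

lemma ffd_aux_nil (c s : ℝ) : ffdBinAux c [] s = (s, []) := by rw [ffdBinAux]

lemma ffd_aux_pos {c s x : ℝ} (l : List ℝ) (h : s + x ≤ c) :
    ffdBinAux c (x :: l) s = ffdBinAux c l (s + x) := by
  rw [ffdBinAux, if_pos h]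

lemma ffd_aux_neg {c s x : ℝ} (l : List ℝ) (h : ¬ s + x ≤ c) :
    ffdBinAux c (x :: l) s = ((ffdBinAux c l s).1, x :: (ffdBinAux c l s).2) := by
  rw [ffdBinAux, if_neg h]

lemma ffdBinAux_sum (c : ℝ) : ∀ (l : List ℝ) (s : ℝ),
    (ffdBinAux c l s).1 + (ffdBinAux c l s).2.sum = s + l.sum := by
  intro l
  induction l with
  | nil => intro s; simp [ffdBinAux]
  | cons x l ih =>
    intro s
    rw [ffdBinAux]
    split
    · rw [ih]; simp; ring
    · simp only [List.sum_cons]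
      have := ih s
      push_cast at *
      linarith [ih s]

lemma ffdBinAux_fst_le (c : ℝ) : ∀ (l : List ℝ) (s : ℝ),
    (ffdBinAux c l s).1 ≤ max s c := by
  intro l
  induction l with
  | nil => intro s; simp [ffdBinAux]
  | cons x l ih =>
    intro s
    rw [ffdBinAux]
    split
    · next h =>
        exact (ih (s + x)).trans (max_le ((le_max_right s c).trans' h) (le_max_right s c))
    · exact ih s

lemma ffdBins_sum_of_length_lt (c : ℝ) : ∀ (fuel : ℕ) (l : List ℝ),
    (ffdBins c fuel l).length < fuel → (ffdBins c fuel l).sum = l.sum := by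
  intro fuel
  induction fuel with
  | zero => intro l h; simp [ffdBins] at h
  | succ n ih =>
    intro l h
    match l with
    | [] => simp [ffdBins]
    | x :: l =>
      rw [ffdBins] at h ⊢
      simp only [List.length_cons, Nat.add_lt_add_iff_right] at h
      simp only [List.sum_cons]
      rw [ih _ h]
      have := ffdBinAux_sum c (x :: l) 0
      simp at this
      linarith

lemma ffdBins_mem_le (c : ℝ) : ∀ (fuel : ℕ) (l : List ℝ) (b : ℝ),
    b ∈ ffdBins c fuel l → b ≤ max 0 c := by
  intro fuel
  induction fuel with
  | zero => intro l b h; simp [ffdBins] at h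
  | succ n ih =>
    intro l b h
    match l with
    | [] => simp [ffdBins] at h
    | x :: l =>
      rw [ffdBins] at h
      rcases List.mem_cons.1 h with h | h
      · subst h; exact ffdBinAux_fst_le c (x :: l) 0
      · exact ih _ _ h

/-- FFD with capacity 60 on `(44, 24, 24, 22, 21, 17, 8, 8, 6, 6)` uses exactly 3 bins
`(44+8+8), (24+24+6+6), (22+21+17)`, each with sum exactly 60; moreover, for any
capacity `c < 60`, FFD uses more than 3 bins on this input. -/
theorem ffd_sixty_three_bins_and_minimal :
    ffd 60 [44, 24, 24, 22, 21, 17, 8, 8, 6, 6] = [60, 60, 60] ∧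
    ∀ c : ℝ, c < 60 → 3 < (ffd c [44, 24, 24, 22, 21, 17, 8, 8, 6, 6]).length := by
  constructor
  · rw [ffd, ffd_sorted10]
    norm_num [ffdBins, ffdBinAux]
  · intro c hc
    by_contra hlen
    push_neg at hlen
    have hlt : (ffd c [44, 24, 24, 22, 21, 17, 8, 8, 6, 6]).length < 10 := by omega
    have hsum : (ffd c [44, 24, 24, 22, 21, 17, 8, 8, 6, 6]).sum = 180 := by
      rw [ffd, ffd_sorted10] at hlt ⊢
      have hlt' : (ffdBins c 10 ([44, 24, 24, 22, 21, 17, 8, 8, 6, 6] : List ℝ)).length < 10 := hlt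
      show (ffdBins c 10 _).sum = 180
      rw [ffdBins_sum_of_length_lt c 10 _ hlt']
      norm_num
    have hM : ∀ b ∈ ffd c [44, 24, 24, 22, 21, 17, 8, 8, 6, 6], b ≤ max 0 c := by
      intro b hb
      rw [ffd, ffd_sorted10] at hb
      exact ffdBins_mem_le c 10 _ b hb
    have hbound := List.sum_le_card_nsmul _ (max 0 c) hM
    have hMlt : max 0 c < 60 := max_lt (by norm_num) hc
    have h3 : ((ffd c [44, 24, 24, 22, 21, 17, 8, 8, 6, 6]).length : ℝ) ≤ 3 := by
      exact_mod_cast hlen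
    have hMpos : (0:ℝ) ≤ max 0 c := le_max_left 0 c
    rw [nsmul_eq_mul, hsum] at hbound
    nlinarith
end

section
/- If vectors s, t ∈ ℝ^m satisfy s dominates t, and we add the same positive number x to a minimal coordinate of s and to a minimal coordinate of t, then the resulting vector s' dominates the resulting vector t'. -/
/- Take a permutation `π` witnessing the domination and compose it with the transposition that
sends `j` to `π⁻¹ i`, so that the minimal coordinate `j` of `t` is matched with the minimal
coordinate `i` of `s`. This costs nothing: `t j` is at most `t (π⁻¹ i) ≤ s i`, and the coordinate
`π⁻¹ i` that used to be matched with `i` is now matched with `π j`, where `s (π j) ≥ s i`. Once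
`j` and `i` are matched, adding `x` to both of them keeps the inequality, and the other
coordinates are untouched. -/

namespace Dominates

variable {m : ℕ} {s t : Fin m → ℝ}

theorem exists_perm_apply_eq_of_isMin (h : Dominates s t) {i j : Fin m}
    (hi : ∀ k, s i ≤ s k) (hj : ∀ k, t j ≤ t k) :
    ∃ σ : Equiv.Perm (Fin m), σ j = i ∧ ∀ k, t k ≤ s (σ k) := by
  obtain ⟨π, hπ⟩ := h
  refine ⟨π * Equiv.swap j (π⁻¹ i), by simp, fun k => ?_⟩
  rcases eq_or_ne k j with rfl | hkj
  · simpa using (hj (π⁻¹ i)).trans (by simpa using hπ (π⁻¹ i))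
  rcases eq_or_ne k (π⁻¹ i) with rfl | hki
  · calc t (π⁻¹ i) ≤ s i := by simpa using hπ (π⁻¹ i)
      _ ≤ _ := hi _
  · rw [Equiv.Perm.mul_apply, Equiv.swap_apply_of_ne_of_ne hkj hki]
    exact hπ k

theorem update_of_perm_apply_eq {σ : Equiv.Perm (Fin m)} {i j : Fin m} (hσ : σ j = i)
    (hst : ∀ k, t k ≤ s (σ k)) {a b : ℝ} (hba : b ≤ a) :
    Dominates (Function.update s i a) (Function.update t j b) := by
  refine ⟨σ, fun k => ?_⟩
  rcases eq_or_ne k j with rfl | hkj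
  · simpa [hσ] using hba
  · have hσk : σ k ≠ i := hσ ▸ σ.injective.ne hkj
    simpa [Function.update_of_ne hkj, Function.update_of_ne hσk] using hst k

end Dominates

theorem dominates_add_to_min_general {m : ℕ} (s t : Fin m → ℝ) (h : Dominates s t)
    (i j : Fin m) (hi : ∀ k, s i ≤ s k) (hj : ∀ k, t j ≤ t k) (x : ℝ) :
    Dominates (Function.update s i (s i + x)) (Function.update t j (t j + x)) := by
  obtain ⟨σ, hσ, hst⟩ := h.exists_perm_apply_eq_of_isMin hi hj
  exact Dominates.update_of_perm_apply_eq hσ hst (by simpa [hσ] using hst j)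

/-- If `s` dominates `t`, and the same `x > 0` is added to a minimal coordinate of `s`
and to a minimal coordinate of `t`, then the resulting vector dominates the resulting
vector. -/
theorem dominates_add_to_min {m : ℕ} (s t : Fin m → ℝ) (h : Dominates s t)
    (i j : Fin m) (hi : ∀ k, s i ≤ s k) (hj : ∀ k, t j ≤ t k) (x : ℝ) (hx : 0 < x) :
    Dominates (Function.update s i (s i + x)) (Function.update t j (t j + x)) :=
  dominates_add_to_min_general s t h i j hi hj x
end
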